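/- If P' is a subsequence of P such that every vertex of P is within distance μ of the last vertex of P' that precedes it, then D_F(P, Q) ≤ D_F(P', Q) + μ for any sequence Q. -/

import Mathlib

/-! Every monotone walk through `P' × Q` lifts to one through `P × Q`: where the walk advances from
the vertex `P (g a)` of `P'` to `P (g (a + 1))`, insert the skipped vertices of `P`, all matched to
the current vertex `Q j`. A skipped vertex lies within `μ` of `P (g a)`, the last vertex of `P'`
preceding it, so by the triangle inequality its distance to `Q j` exceeds that of `P (g a)` by at
most `μ`. -/

open scoped BigOperators

namespace Frechet

variable {X : Type*}

/-- A single step of a monotone discrete walk: each coordinate increases by 0 or 1,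
and not both stay the same. -/
def IsStep (a b : ℕ × ℕ) : Prop :=
  (b.1 = a.1 ∨ b.1 = a.1 + 1) ∧ (b.2 = a.2 ∨ b.2 = a.2 + 1) ∧ b ≠ a

/-- A monotone discrete walk from (0,0) to (n-1, m-1) in the n × m lattice
(0-indexed version of a walk from (1,1) to (n,m)). -/
def IsWalk (n m : ℕ) (F : List (ℕ × ℕ)) : Prop :=
  F ≠ [] ∧ F.head? = some (0, 0) ∧ F.getLast? = some (n - 1, m - 1) ∧
    F.Chain' IsStep ∧ ∀ p ∈ F, p.1 < n ∧ p.2 < m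

/-- Cost of a walk: the maximum matched distance along it. -/
def walkCost (d : X → X → ℝ) (P Q : ℕ → X) (F : List (ℕ × ℕ)) : ℝ :=
  (F.map fun p => d (P p.1) (Q p.2)).foldr max 0

/-- Discrete Fréchet distance between `P` (first `n` points) and `Q` (first `m` points),
computed with respect to the distance-like function `d`. -/
noncomputable def dF (d : X → X → ℝ) (P : ℕ → X) (n : ℕ) (Q : ℕ → X) (m : ℕ) : ℝ :=
  sInf {c | ∃ F, IsWalk n m F ∧ walkCost d P Q F = c}

/-- Arc length of the polygonal curve `P` between vertex indices `i` and `j`. -/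
def arcLen (d : X → X → ℝ) (P : ℕ → X) (i j : ℕ) : ℝ :=
  ∑ k ∈ Finset.Ico i j, d (P k) (P (k + 1))

/-- `S` is the list of indices of the greedy `μ`-simplification of the curve
`P` with `n` vertices: it starts at vertex `0`, after a vertex `a` the next chosen
vertex `b` is the first one with arc length `> μ` (unless `b` is the final vertex
`n-1`, which is always appended), and it ends at vertex `n-1`. -/
def IsSimplification (d : X → X → ℝ) (P : ℕ → X) (n : ℕ) (μ : ℝ) (S : List ℕ) : Prop :=
  S.head? = some 0 ∧ S.getLast? = some (n - 1) ∧ S.Pairwise (· < ·) ∧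
    (∀ a ∈ S, a < n) ∧
    S.Chain' (fun a b =>
      (∀ j, a < j → j < b → arcLen d P a j ≤ μ) ∧ (b = n - 1 ∨ μ < arcLen d P a b))

/-- The subsequence of `P` selected by the index list `S`, as a curve. -/
def subCurve (P : ℕ → X) (S : List ℕ) : ℕ → X :=
  fun t => P (S.getD t 0)

/-- Discrete c-packedness of the polygonal curve `P` (first `n` vertices): for every
ball, the total length of the edges of `P` contained in the ball is at most `c`
times the radius. -/
def CPacked (d : X → X → ℝ) (P : ℕ → X) (n : ℕ) (c : ℝ) : Prop :=
  ∀ (x : X) (r : ℝ), 0 ≤ r →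
    ∑ k ∈ Finset.range (n - 1),
      (if d (P k) x ≤ r ∧ d (P (k + 1)) x ≤ r then d (P k) (P (k + 1)) else 0) ≤ c * r

/-- Directed discrete Hausdorff distance from `P` (first `n` points) to `Q`
(first `m` points). -/
noncomputable def dirHaus (d : X → X → ℝ) (P : ℕ → X) (n : ℕ) (Q : ℕ → X) (m : ℕ) : ℝ :=
  sSup {r | ∃ i < n, r = sInf {s | ∃ j < m, s = d (P i) (Q j)}}

/-- Discrete (symmetric) Hausdorff distance. -/
noncomputable def dHaus (d : X → X → ℝ) (P : ℕ → X) (n : ℕ) (Q : ℕ → X) (m : ℕ) : ℝ :=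
  max (dirHaus d P n Q m) (dirHaus d Q m P n)

open Set

section WalkCost

variable {d : X → X → ℝ} {P Q : ℕ → X} {F : List (ℕ × ℕ)}

theorem walkCost_nonneg : 0 ≤ walkCost d P Q F := by
  induction F with
  | nil => exact le_rfl
  | cons p F ih => exact ih.trans (le_max_right _ _)

theorem le_walkCost {p : ℕ × ℕ} (hp : p ∈ F) : d (P p.1) (Q p.2) ≤ walkCost d P Q F :=
  List.le_max_of_le' 0 (List.mem_map_of_mem hp) le_rfl

theorem walkCost_le {B : ℝ} (hB : 0 ≤ B) (h : ∀ p ∈ F, d (P p.1) (Q p.2) ≤ B) :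
    walkCost d P Q F ≤ B := by
  induction F with
  | nil => exact hB
  | cons p F ih =>
    exact max_le (h p List.mem_cons_self) (ih fun q hq => h q (List.mem_cons_of_mem _ hq))

end WalkCost

theorem dF_le_add_of_forall_isWalk {d : X → X → ℝ} {P P' Q : ℕ → X} {n n' m : ℕ} {c : ℝ}
    (hwalk : ∃ F', IsWalk n' m F')
    (hlift : ∀ F', IsWalk n' m F' →
      ∃ F, IsWalk n m F ∧ walkCost d P Q F ≤ walkCost d P' Q F' + c) :
    dF d P n Q m ≤ dF d P' n' Q m + c := by
  have hbdd : BddBelow {x | ∃ F, IsWalk n m F ∧ walkCost d P Q F = x} :=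
    ⟨0, by rintro _ ⟨F, -, rfl⟩; exact walkCost_nonneg⟩
  obtain ⟨F', hF'⟩ := hwalk
  rw [← sub_le_iff_le_add]
  refine le_csInf ⟨_, F', hF', rfl⟩ ?_
  rintro _ ⟨F', hF', rfl⟩
  obtain ⟨F, hF, hcost⟩ := hlift F' hF'
  exact sub_le_iff_le_add.2 ((csInf_le hbdd ⟨F, hF, rfl⟩).trans hcost)

theorem isStep_right (i j : ℕ) : IsStep (i, j) (i + 1, j) := by
  simp [IsStep]

theorem isStep_up (i j : ℕ) : IsStep (i, j) (i, j + 1) := by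
  simp [IsStep]

def row (j x c : ℕ) : List (ℕ × ℕ) := (List.range' x c).map (·, j)

def column (i y c : ℕ) : List (ℕ × ℕ) := (List.range' y c).map (i, ·)

theorem row_succ (j x c : ℕ) : row j x (c + 1) = (x, j) :: row j (x + 1) c := rfl

theorem mem_row {r : ℕ × ℕ} {j x c : ℕ} : r ∈ row j x c ↔ r.2 = j ∧ x ≤ r.1 ∧ r.1 < x + c := by
  obtain ⟨r1, r2⟩ := r
  simp [row, and_comm, eq_comm]

theorem mem_column {r : ℕ × ℕ} {i y c : ℕ} :
    r ∈ column i y c ↔ r.1 = i ∧ y ≤ r.2 ∧ r.2 < y + c := by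
  obtain ⟨r1, r2⟩ := r
  simp [column, and_comm, eq_comm]

theorem getLast?_row (j x c : ℕ) : (row j x (c + 1)).getLast? = some (x + c, j) := by
  simp [row, List.getLast?_range']

theorem getLast?_column (i y c : ℕ) : (column i y (c + 1)).getLast? = some (i, y + c) := by
  simp [column, List.getLast?_range']

theorem isChain_row (j x c : ℕ) : (row j x c).IsChain IsStep :=
  (List.isChain_map _).2 <|
    (List.isChain_range' x c 1).imp fun a b (h : b = a + 1) => h ▸ isStep_right a j

theorem isChain_column (i y c : ℕ) : (column i y c).IsChain IsStep :=
  (List.isChain_map _).2 <|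
    (List.isChain_range' y c 1).imp fun a b (h : b = a + 1) => h ▸ isStep_up i a

def staircase (n m : ℕ) : List (ℕ × ℕ) := row 0 0 n ++ column (n - 1) 1 (m - 1)

theorem isWalk_staircase {n m : ℕ} (hn : 0 < n) (hm : 0 < m) : IsWalk n m (staircase n m) := by
  obtain ⟨n, rfl⟩ := Nat.exists_add_one_eq.2 hn
  obtain ⟨m, rfl⟩ := Nat.exists_add_one_eq.2 hm
  refine ⟨by simp [staircase, row], by simp [staircase, row_succ], ?_, ?_, ?_⟩
  · cases m with
    | zero => simp [staircase, column, getLast?_row]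
    | succ m => simp [staircase, getLast?_column, add_comm]
  · refine List.isChain_append.2 ⟨isChain_row .., isChain_column .., ?_⟩
    intro a ha b hb
    cases m with
    | zero => simp [column] at hb
    | succ m =>
      obtain rfl : (0 + n, 0) = a := Option.mem_some_iff.1 (getLast?_row 0 0 n ▸ ha)
      obtain rfl : (n, 1) = b := Option.mem_some_iff.1 hb
      simpa using isStep_up n 0
  · simp only [staircase, List.mem_append, mem_row, mem_column]
    omega

/-- Lifts a walk through the columns `0, …, L - 1` to the columns `g 0, …, g (L - 1)`: the points
`(g a + 1, j), …, (g (a + 1) - 1, j)` are inserted after a point `(a, j)` followed by a horizontal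
or diagonal step (after a vertical step, `g q.1 - g p.1 - 1 + 1 = 1` and nothing is inserted). -/
def expand (g : ℕ → ℕ) : List (ℕ × ℕ) → List (ℕ × ℕ)
  | [] => []
  | [p] => [(g p.1, p.2)]
  | p :: q :: l => row p.2 (g p.1) (g q.1 - g p.1 - 1 + 1) ++ expand g (q :: l)

section Expand

variable {g : ℕ → ℕ}

theorem head?_expand (p : ℕ × ℕ) (l : List (ℕ × ℕ)) :
    (expand g (p :: l)).head? = some (g p.1, p.2) := by
  cases l <;> rfl

theorem getLast?_expand : ∀ l : List (ℕ × ℕ),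
    (expand g l).getLast? = l.getLast?.map fun p => (g p.1, p.2)
  | [] => rfl
  | [_] => rfl
  | p :: q :: l => by simp [expand, getLast?_expand (q :: l), List.getLast?_cons]

theorem isChain_expand {L : ℕ} (hg : StrictMonoOn g (Iio L)) :
    ∀ {l : List (ℕ × ℕ)}, l.IsChain IsStep → (∀ p ∈ l, p.1 < L) → (expand g l).IsChain IsStep
  | [], _, _ => .nil
  | [_], _, _ => .singleton _
  | p :: q :: l, hl, hL => by
    rw [List.isChain_cons_cons] at hl
    refine List.isChain_append.2 ⟨isChain_row .., isChain_expand hg hl.2 fun r hr =>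
      hL r (.tail _ hr), ?_⟩
    simp only [getLast?_row, head?_expand, Option.mem_some_iff]
    rintro _ rfl _ rfl
    obtain ⟨h1 | h1, h2, hne⟩ := hl.1
    · simp only [IsStep, Prod.ext_iff, ne_eq, h1, true_and] at hne ⊢
      omega
    · have : g p.1 < g q.1 := hg (hL p (by simp)) (hL q (by simp)) (by omega)
      simp only [IsStep, Prod.ext_iff, ne_eq] at hne ⊢
      omega

theorem mem_expand : ∀ {l : List (ℕ × ℕ)}, l.IsChain IsStep → ∀ {r : ℕ × ℕ}, r ∈ expand g l →
    (∃ p ∈ l, r = (g p.1, p.2)) ∨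
      ∃ p ∈ l, ∃ q ∈ l, q.1 = p.1 + 1 ∧ r.2 = p.2 ∧ g p.1 < r.1 ∧ r.1 < g q.1
  | [], _, _, hr => nomatch hr
  | [p], _, _, hr => .inl ⟨p, List.mem_singleton_self _, List.mem_singleton.1 hr⟩
  | p :: q :: l, hl, r, hr => by
    rw [List.isChain_cons_cons] at hl
    rcases List.mem_append.1 hr with hr | hr
    · rw [mem_row] at hr
      by_cases hr1 : r.1 = g p.1
      · exact .inl ⟨p, by simp, Prod.ext hr1 hr.1⟩
      · have hq1 : q.1 = p.1 + 1 := hl.1.1.resolve_left fun h => by rw [h] at hr; omega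
        exact .inr ⟨p, by simp, q, by simp, hq1, hr.1, by omega, by omega⟩
    · rcases mem_expand hl.2 hr with ⟨p', hp', h⟩ | ⟨p', hp', q', hq', h⟩
      · exact .inl ⟨p', .tail _ hp', h⟩
      · exact .inr ⟨p', .tail _ hp', q', .tail _ hq', h⟩

theorem isWalk_expand {L n m : ℕ} (hg : StrictMonoOn g (Iio L)) (hgn : MapsTo g (Iio L) (Iio n))
    (hg0 : g 0 = 0) (hgL : g (L - 1) = n - 1) {F : List (ℕ × ℕ)} (hF : IsWalk L m F) :
    IsWalk n m (expand g F) := by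
  obtain ⟨hne, hhead, hlast, hchain, hbound⟩ := hF
  obtain ⟨p, l, rfl⟩ := List.exists_cons_of_ne_nil hne
  obtain rfl : p = (0, 0) := by simpa using hhead
  have hhead' := head?_expand (g := g) (0, 0) l
  refine ⟨fun h => by simp [h] at hhead', by simpa [hg0] using hhead',
    by simp [getLast?_expand, hlast, hgL], isChain_expand hg hchain fun p hp => (hbound p hp).1, ?_⟩
  intro r hr
  rcases mem_expand hchain hr with ⟨p, hp, rfl⟩ | ⟨p, hp, q, hq, -, h2, -, h4⟩
  · exact ⟨hgn (hbound p hp).1, (hbound p hp).2⟩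
  · exact ⟨h4.trans (hgn (hbound q hq).1), h2 ▸ (hbound p hp).2⟩

theorem walkCost_expand_le [PseudoMetricSpace X] {P Q : ℕ → X} {L m : ℕ} {μ : ℝ} (hμ : 0 ≤ μ)
    (hclose : ∀ a, a + 1 < L → ∀ k, g a < k → k < g (a + 1) → dist (P (g a)) (P k) ≤ μ)
    {F : List (ℕ × ℕ)} (hF : IsWalk L m F) :
    walkCost dist P Q (expand g F) ≤ walkCost dist (P ∘ g) Q F + μ := by
  refine walkCost_le (add_nonneg walkCost_nonneg hμ) fun r hr => ?_
  rcases mem_expand hF.2.2.2.1 hr with ⟨p, hp, rfl⟩ | ⟨p, hp, q, hq, hq1, h2, h3, h4⟩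
  · exact (le_walkCost (P := P ∘ g) hp).trans (le_add_of_nonneg_right hμ)
  · have hpL : p.1 + 1 < L := hq1 ▸ (hF.2.2.2.2 q hq).1
    calc dist (P r.1) (Q r.2) ≤ dist (P (g p.1)) (P r.1) + dist (P (g p.1)) (Q p.2) :=
          h2 ▸ dist_triangle_left _ _ _
      _ ≤ μ + walkCost dist (P ∘ g) Q F :=
          add_le_add (hclose p.1 hpL r.1 h3 (hq1 ▸ h4)) (le_walkCost (P := P ∘ g) hp)
      _ = walkCost dist (P ∘ g) Q F + μ := add_comm _ _

end Expand

theorem dF_le_dF_comp_add [PseudoMetricSpace X] (P Q : ℕ → X) {g : ℕ → ℕ} {L n m : ℕ} {μ : ℝ}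
    (hL : 0 < L) (hm : 0 < m) (hμ : 0 ≤ μ) (hg : StrictMonoOn g (Iio L))
    (hgn : MapsTo g (Iio L) (Iio n)) (hg0 : g 0 = 0) (hgL : g (L - 1) = n - 1)
    (hclose : ∀ a, a + 1 < L → ∀ k, g a < k → k < g (a + 1) → dist (P (g a)) (P k) ≤ μ) :
    dF dist P n Q m ≤ dF dist (P ∘ g) L Q m + μ :=
  dF_le_add_of_forall_isWalk ⟨_, isWalk_staircase hL hm⟩ fun _ hF =>
    ⟨_, isWalk_expand hg hgn hg0 hgL hF, walkCost_expand_le hμ hclose hF⟩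

section IndexList

variable {S : List ℕ}

theorem strictMonoOn_getD (hS : S.Pairwise (· < ·)) : StrictMonoOn (S.getD · 0) (Iio S.length) :=
  fun a ha b hb hab => by
    simpa only [List.getD_eq_getElem _ _ ha, List.getD_eq_getElem _ _ hb] using
      List.pairwise_iff_getElem.1 hS a b ha hb hab

theorem le_getD_of_le_of_lt_getD_succ (hS : S.Pairwise (· < ·)) {a k b : ℕ}
    (ha : a + 1 < S.length) (hk : k < S.getD (a + 1) 0) (hb : b ∈ S) (hbk : b ≤ k) :
    b ≤ S.getD a 0 := by
  obtain ⟨i, hi, rfl⟩ := List.mem_iff_getElem.1 hb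
  rw [← List.getD_eq_getElem _ 0 hi] at hbk ⊢
  have hmono := strictMonoOn_getD hS
  have hia : i < a + 1 := (hmono.lt_iff_lt hi ha).1 (hbk.trans_lt hk)
  exact hmono.monotoneOn hi (show a < S.length by omega) (by omega)

end IndexList

theorem dF_le_subsequence_add_general {X : Type*} [MetricSpace X]
    (P : ℕ → X) (n : ℕ)
    (Q : ℕ → X) (m : ℕ) (hm : 0 < m) (μ : ℝ) (hμ : 0 ≤ μ)
    (S : List ℕ) (hhead : S.head? = some 0) (hlast : S.getLast? = some (n - 1))
    (hsorted : S.Pairwise (· < ·)) (hmem : ∀ a ∈ S, a < n)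
    (hpred : ∀ i < n, ∀ a ∈ S, a ≤ i → (∀ b ∈ S, b ≤ i → b ≤ a) →
      dist (P a) (P i) ≤ μ) :
    dF dist P n Q m ≤ dF dist (subCurve P S) S.length Q m + μ := by
  have hL : 0 < S.length := List.length_pos_iff.2 fun h => by simp [h] at hhead
  have hgS : ∀ a < S.length, S.getD a 0 ∈ S := fun a ha =>
    List.getD_eq_getElem _ _ ha ▸ List.getElem_mem ha
  refine dF_le_dF_comp_add P Q hL hm hμ (strictMonoOn_getD hsorted)
    (fun a ha => hmem _ (hgS a ha)) ?_ ?_ fun a ha k hak hk => ?_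
  · rw [List.head?_eq_getElem?] at hhead
    simp [List.getD_eq_getElem?_getD, hhead]
  · rw [List.getLast?_eq_getElem?] at hlast
    simp [List.getD_eq_getElem?_getD, hlast]
  · exact hpred k (hk.trans (hmem _ (hgS _ ha))) _ (hgS a (by omega)) hak.le
      fun b hb hbk => le_getD_of_le_of_lt_getD_succ hsorted ha hk hb hbk

/-- if `P'` (the subsequence of `P` given by the index list `S`,
containing the first and last vertices) is such that every vertex of `P` is within
distance `μ` of the last vertex of `P'` preceding it, then
`D_F(P, Q) ≤ D_F(P', Q) + μ` for every sequence `Q`. -/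
theorem dF_le_subsequence_add {X : Type*} [MetricSpace X]
    (P : ℕ → X) (n : ℕ) (hn : 0 < n)
    (Q : ℕ → X) (m : ℕ) (hm : 0 < m) (μ : ℝ) (hμ : 0 ≤ μ)
    (S : List ℕ) (hhead : S.head? = some 0) (hlast : S.getLast? = some (n - 1))
    (hsorted : S.Pairwise (· < ·)) (hmem : ∀ a ∈ S, a < n)
    (hpred : ∀ i < n, ∀ a ∈ S, a ≤ i → (∀ b ∈ S, b ≤ i → b ≤ a) →
      dist (P a) (P i) ≤ μ) :
    dF dist P n Q m ≤ dF dist (subCurve P S) S.length Q m + μ :=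
  dF_le_subsequence_add_general P n Q m hm μ hμ S hhead hlast hsorted hmem hpred

end Frechet
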